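/- Let F be any probability distribution on [0,∞) and let 0 ≤ k < n. Then the optimal revenue obtainable from n − k bidders with values drawn i.i.d. from F is at least (1 − k/n) times the optimal revenue obtainable from n bidders with values drawn i.i.d. from F: OPT(F,…,F; n−k bidders) ≥ (1 − k/n) · OPT(F,…,F; n bidders). -/

import Mathlib

open MeasureTheory ProbabilityTheory Real Finset

noncomputable section

/-- A regular distribution: a probability measure on an interval of `[0,∞)` with a
positive continuous density whose virtual value `x - (1 - F(x))/f(x)` is nondecreasing. -/
structure RegularDist where
  μ : Measure ℝ
  prob : IsProbabilityMeasure μ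
  supp : Set ℝ
  dens : ℝ → ℝ
  supp_subset : supp ⊆ Set.Ici 0
  supp_interval : supp.OrdConnected
  dens_cont : ContinuousOn dens supp
  dens_pos : ∀ x ∈ supp, 0 < dens x
  dens_zero : ∀ x ∉ supp, dens x = 0
  eq_withDensity : μ = volume.withDensity (fun x => ENNReal.ofReal (dens x))
  regular : MonotoneOn (fun x => x - (1 - (μ (Set.Iic x)).toReal) / dens x) supp

/-- `F` hazard-rate dominates `G`: the hazard rate of `F` is at most that of `G`
on the intersection of their supports. -/
def HRDominates (F G : RegularDist) : Prop :=
  ∀ x ∈ F.supp ∩ G.supp,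
    F.dens x / (1 - (F.μ (Set.Iic x)).toReal) ≤ G.dens x / (1 - (G.μ (Set.Iic x)).toReal)

/-- A dominant-strategy truthful, individually rational single-item mechanism for `n`
bidders with nonnegative values. -/
structure Mechanism (n : ℕ) where
  alloc : (Fin n → ℝ) → Fin n → ℝ
  pay : (Fin n → ℝ) → Fin n → ℝ
  alloc_meas : ∀ i, Measurable fun v => alloc v i
  pay_meas : ∀ i, Measurable fun v => pay v i
  alloc_bool : ∀ v i, alloc v i = 0 ∨ alloc v i = 1
  alloc_sum_le_one : ∀ v, ∑ i, alloc v i ≤ 1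
  pay_nonneg : ∀ v i, 0 ≤ pay v i
  truthful : ∀ v, (∀ i, 0 ≤ v i) → ∀ i b, 0 ≤ b →
    v i * alloc (Function.update v i b) i - pay (Function.update v i b) i ≤
      v i * alloc v i - pay v i
  ir : ∀ v, (∀ i, 0 ≤ v i) → ∀ i, 0 ≤ v i * alloc v i - pay v i

/-- The optimal revenue for `n` independent bidders with value distributions `F i`. -/
def optRevenue (n : ℕ) (F : Fin n → Measure ℝ) : ℝ :=
  ⨆ M : Mechanism n, ∫ v, ∑ i, M.pay v i ∂(Measure.pi F)

/-- The highest value in a profile. -/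
def highest {m : ℕ} (v : Fin m → ℝ) : ℝ := ⨆ i, v i

/-- The second-highest value in a profile (the maximum over pairs of distinct
indices of the smaller of the two values). -/
def secondHighest {m : ℕ} (v : Fin m → ℝ) : ℝ :=
  ⨆ p : {p : Fin m × Fin m // p.1 ≠ p.2}, min (v p.1.1) (v p.1.2)

/-- Expected revenue of the Vickrey auction (no reserve) when the value profile is
distributed according to `μ`. -/
def vickreyRev {m : ℕ} (μ : Measure (Fin m → ℝ)) : ℝ :=
  ∫ v, secondHighest v ∂μ

/-- Revenue of the Vickrey auction with reserve `r` on the value profile `v`. -/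
def vickreyReserve {m : ℕ} (r : ℝ) (v : Fin m → ℝ) : ℝ :=
  if r ≤ highest v then max r (secondHighest v) else 0

end

/-!
Given an `n`-bidder mechanism, some cyclic window of `n - k` bidders collects at least an
`(n - k) / n` share of its expected revenue. Fixing the values of the remaining `k` bidders at a
profile that does at least as well as the average (first moment method) turns the mechanism
into a truthful one for the window bidders alone, collecting that share.
When revenues are unbounded, `⨆` over `ℝ` is `0`; extending an `(n - k)`-bidder mechanism by
ignored bidders shows that unboundedness passes from `n - k` to `n` bidders, so both sides vanish.
-/

open Function

section Glue

variable {ι κ α X : Type*} [MeasurableSpace X]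

def glue (σ : ι ⊕ κ ≃ α) : (ι → X) × (κ → X) ≃ᵐ (α → X) :=
  (MeasurableEquiv.sumPiEquivProdPi fun _ => X).symm.trans
    (MeasurableEquiv.arrowCongr' σ (MeasurableEquiv.refl X))

@[simp]
theorem glue_apply_apply (σ : ι ⊕ κ ≃ α) (p : (ι → X) × (κ → X)) (s : ι ⊕ κ) :
    glue σ p (σ s) = Sum.elim p.1 p.2 s := by
  simp only [glue, MeasurableEquiv.trans_apply, MeasurableEquiv.arrowCongr', Equiv.arrowCongr']
  cases s <;> simp <;> rfl

variable [DecidableEq α]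

theorem update_glue_inl [DecidableEq ι] (σ : ι ⊕ κ ≃ α) (w : ι → X) (c : κ → X) (i : ι)
    (b : X) :
    update (glue σ (w, c)) (σ (.inl i)) b = glue σ (update w i b, c) := by
  ext j
  obtain ⟨s, rfl⟩ := σ.surjective j
  rcases s with i' | i'
  · by_cases h : i' = i <;> simp [h]
  · simp

theorem update_glue_inr [DecidableEq κ] (σ : ι ⊕ κ ≃ α) (w : ι → X) (c : κ → X) (i : κ)
    (b : X) :
    update (glue σ (w, c)) (σ (.inr i)) b = glue σ (w, update c i b) := by
  ext j
  obtain ⟨s, rfl⟩ := σ.surjective j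
  rcases s with i' | i'
  · simp
  · by_cases h : i' = i <;> simp [h]

end Glue

theorem measurePreserving_glue {ι κ α X : Type*} [Fintype ι] [Fintype κ] [Fintype α]
    [MeasurableSpace X] (σ : ι ⊕ κ ≃ α) (μ : Measure X) [SigmaFinite μ] :
    MeasurePreserving (glue σ) ((Measure.pi fun _ : ι => μ).prod (Measure.pi fun _ : κ => μ))
      (Measure.pi fun _ : α => μ) :=
  (measurePreserving_arrowCongr' (fun _ => μ) (fun _ => μ) σ (MeasurableEquiv.refl X)
    fun _ => MeasurePreserving.id μ).comp (measurePreserving_sumPiEquivProdPi_symm fun _ => μ)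

theorem sum_glue {ι κ α Y : Type*} [Fintype ι] [Fintype κ] [Fintype α] [AddCommMonoid Y]
    [MeasurableSpace Y]
    (σ : ι ⊕ κ ≃ α) (a : ι → Y) (b : κ → Y) :
    ∑ j, glue σ (a, b) j = ∑ i, a i + ∑ i, b i := by
  rw [← σ.sum_comp, Fintype.sum_sum_type]
  simp

theorem glue_nonneg {ι κ α X : Type*} [MeasurableSpace X] [Preorder X] [Zero X]
    (σ : ι ⊕ κ ≃ α) {w : ι → X} {c : κ → X} (hw : ∀ i, 0 ≤ w i) (hc : ∀ i, 0 ≤ c i)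
    (j : α) :
    0 ≤ glue σ (w, c) j := by
  obtain ⟨s, rfl⟩ := σ.surjective j
  rcases s with i | i
  · simpa using hw i
  · simpa using hc i

theorem ae_nonneg_pi {ι X : Type*} [Fintype ι] [MeasurableSpace X] [Preorder X] [Zero X]
    {μ : Measure X} [SigmaFinite μ] (h : ∀ᵐ x ∂μ, 0 ≤ x) :
    ∀ᵐ v ∂Measure.pi fun _ : ι => μ, 0 ≤ v := by
  simp only [Pi.le_def, Pi.zero_apply]
  exact ae_all_iff.2 fun _ => Measure.tendsto_eval_ae_ae h

theorem exists_card_div_mul_sum_le_sum_add {G ι : Type*} [AddGroup G] [Fintype G] [Nonempty G]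
    [Fintype ι] (e : ι → G) (I : G → ℝ) :
    ∃ t, (Fintype.card ι / Fintype.card G : ℝ) * ∑ g, I g ≤ ∑ i, I (e i + t) := by
  have hG : (Fintype.card G : ℝ) ≠ 0 := Nat.cast_ne_zero.2 Fintype.card_ne_zero
  obtain ⟨t, -, ht⟩ := Finset.exists_le_of_sum_le Finset.univ_nonempty (s := Finset.univ)
    (f := fun _ => (Fintype.card ι / Fintype.card G : ℝ) * ∑ g, I g)
    (g := fun t => ∑ i, I (e i + t)) <| by
      have hshift : ∀ i, ∑ t, I (e i + t) = ∑ g, I g := fun i =>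
        Fintype.sum_equiv (Equiv.addLeft (e i)) _ _ fun _ => rfl
      rw [Finset.sum_const, Finset.card_univ, nsmul_eq_mul, Finset.sum_comm]
      simp only [hshift]
      field_simp
      simp
  exact ⟨t, ht⟩

namespace Mechanism

variable {m n : ℕ} {κ : Type*} [Fintype κ]

theorem alloc_nonneg (M : Mechanism n) (v : Fin n → ℝ) (i : Fin n) : 0 ≤ M.alloc v i := by
  rcases M.alloc_bool v i with h | h <;> simp [h]

noncomputable def revenue (M : Mechanism n) (μ : Measure (Fin n → ℝ)) : ℝ :=
  ∫ v, ∑ i, M.pay v i ∂μ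

theorem revenue_nonneg (M : Mechanism n) (μ : Measure (Fin n → ℝ)) : 0 ≤ M.revenue μ :=
  integral_nonneg fun v => Finset.sum_nonneg fun i _ => M.pay_nonneg v i

theorem optRevenue_eq_iSup_revenue (F : Fin n → Measure ℝ) :
    optRevenue n F = ⨆ M : Mechanism n, M.revenue (Measure.pi F) := rfl

/-- The bidders outside the image of `σ ∘ Sum.inl` are simulated with the fixed values `c`;
only the payments of the genuine bidders are collected. -/
def restrict (M : Mechanism n) (σ : Fin m ⊕ κ ≃ Fin n) (c : κ → ℝ) (hc : ∀ i, 0 ≤ c i) :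
    Mechanism m where
  alloc w i := M.alloc (glue σ (w, c)) (σ (.inl i))
  pay w i := M.pay (glue σ (w, c)) (σ (.inl i))
  alloc_meas _ := (M.alloc_meas _).comp ((glue σ).measurable.comp measurable_prodMk_right)
  pay_meas _ := (M.pay_meas _).comp ((glue σ).measurable.comp measurable_prodMk_right)
  alloc_bool _ _ := M.alloc_bool _ _
  alloc_sum_le_one w := by
    refine le_trans ?_ (M.alloc_sum_le_one (glue σ (w, c)))
    rw [← σ.sum_comp, Fintype.sum_sum_type]
    exact le_add_of_nonneg_right (Finset.sum_nonneg fun _ _ => M.alloc_nonneg _ _)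
  pay_nonneg _ _ := M.pay_nonneg _ _
  truthful w hw i b hb := by
    simpa [update_glue_inl] using
      M.truthful (glue σ (w, c)) (glue_nonneg σ hw hc) (σ (.inl i)) b hb
  ir w hw i := by simpa using M.ir _ (glue_nonneg σ hw hc) (σ (.inl i))

def extend (M : Mechanism m) (σ : Fin m ⊕ κ ≃ Fin n) : Mechanism n where
  alloc v := glue σ (M.alloc ((glue σ).symm v).1, 0)
  pay v := glue σ (M.pay ((glue σ).symm v).1, 0)
  alloc_meas j := by
    obtain ⟨s | s, rfl⟩ := σ.surjective j
    · simp only [glue_apply_apply, Sum.elim_inl]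
      exact (M.alloc_meas s).comp (measurable_fst.comp (glue σ).symm.measurable)
    · simp
  pay_meas j := by
    obtain ⟨s | s, rfl⟩ := σ.surjective j
    · simp only [glue_apply_apply, Sum.elim_inl]
      exact (M.pay_meas s).comp (measurable_fst.comp (glue σ).symm.measurable)
    · simp
  alloc_bool v j := by
    obtain ⟨s | s, rfl⟩ := σ.surjective j
    · simpa using M.alloc_bool _ s
    · simp
  alloc_sum_le_one v := by simpa [sum_glue] using M.alloc_sum_le_one _
  pay_nonneg v := glue_nonneg σ (M.pay_nonneg _) fun _ => le_rfl
  truthful v hv j b hb := by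
    classical
    obtain ⟨⟨w, c⟩, rfl⟩ := (glue σ).surjective v
    have hw : ∀ i, 0 ≤ w i := fun i => by simpa using hv (σ (.inl i))
    obtain ⟨i | i, rfl⟩ := σ.surjective j
    · rw [update_glue_inl]
      simpa using M.truthful w hw i b hb
    · rw [update_glue_inr]
      simp
  ir v hv j := by
    obtain ⟨⟨w, c⟩, rfl⟩ := (glue σ).surjective v
    have hw : ∀ i, 0 ≤ w i := fun i => by simpa using hv (σ (.inl i))
    obtain ⟨i | i, rfl⟩ := σ.surjective j
    · simpa using M.ir w hw i
    · simp

variable (μ : Measure ℝ) [IsProbabilityMeasure μ]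

theorem revenue_extend (M : Mechanism m) (σ : Fin m ⊕ κ ≃ Fin n) :
    (M.extend σ).revenue (Measure.pi fun _ => μ) = M.revenue (Measure.pi fun _ => μ) := by
  simp only [revenue, extend, sum_glue, Pi.zero_apply, Finset.sum_const_zero, add_zero]
  rw [← (measurePreserving_glue σ μ).integral_comp']
  simp only [MeasurableEquiv.symm_apply_apply]
  rw [integral_fun_fst fun w => ∑ i, M.pay w i]
  simp

theorem exists_integral_sum_pay_le_revenue_restrict (M : Mechanism n) (σ : Fin m ⊕ κ ≃ Fin n)
    (hμ : ∀ᵐ x ∂μ, 0 ≤ x) :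
    ∃ M' : Mechanism m, ∫ v, ∑ i, M.pay v (σ (.inl i)) ∂Measure.pi (fun _ => μ) ≤
      M'.revenue (Measure.pi fun _ => μ) := by
  set G := fun v => ∑ i, M.pay v (σ (.inl i))
  by_cases hG : Integrable G (Measure.pi fun _ => μ)
  swap
  · exact ⟨M.restrict σ 0 fun _ => le_rfl, by rw [integral_undef hG]; exact revenue_nonneg _ _⟩
  have hpres := measurePreserving_glue σ μ
  have hGglue : Integrable (fun p => G (glue σ p)) _ :=
    (hpres.integrable_comp_emb (glue σ).measurableEmbedding).2 hG
  -- first moment method: some profile `c` of the frozen bidders beats the average over all of them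
  obtain ⟨c, hc, hle⟩ :=
    exists_notMem_null_integral_le hGglue.integral_prod_right (ae_iff.1 (ae_nonneg_pi hμ))
  refine ⟨M.restrict σ c (not_not.1 hc), ?_⟩
  calc ∫ v, G v ∂Measure.pi (fun _ => μ)
      = ∫ p, G (glue σ p) ∂(Measure.pi fun _ => μ).prod (Measure.pi fun _ => μ) :=
        (hpres.integral_comp' G).symm
    _ = ∫ c, ∫ w, G (glue σ (w, c)) ∂Measure.pi (fun _ => μ) ∂Measure.pi (fun _ => μ) :=
        integral_prod_symm _ hGglue
    _ ≤ _ := hle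

variable {k : ℕ}

theorem exists_mul_revenue_le_revenue [NeZero n] (M : Mechanism n) (h : m + k = n)
    (hμ : ∀ᵐ x ∂μ, 0 ≤ x) :
    ∃ M' : Mechanism m,
      (m / n : ℝ) * M.revenue (Measure.pi fun _ => μ) ≤ M'.revenue (Measure.pi fun _ => μ) := by
  let σ₀ : Fin m ⊕ Fin k ≃ Fin n := finSumFinEquiv.trans (finCongr h)
  set I := fun j => ∫ v, M.pay v j ∂Measure.pi (fun _ => μ)
  obtain ⟨t, ht⟩ := exists_card_div_mul_sum_le_sum_add (fun i => σ₀ (.inl i)) I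
  obtain ⟨M', hM'⟩ :=
    M.exists_integral_sum_pay_le_revenue_restrict μ (σ₀.trans (Equiv.addRight t)) hμ
  refine ⟨M', ?_⟩
  by_cases hint : Integrable (fun v => ∑ j, M.pay v j) (Measure.pi fun _ => μ)
  swap
  · rw [revenue, integral_undef hint, mul_zero]
    exact M'.revenue_nonneg _
  have hpay (j : Fin n) : Integrable (fun v => M.pay v j) (Measure.pi fun _ => μ) :=
    hint.mono' (M.pay_meas j).aestronglyMeasurable <| ae_of_all _ fun v => by
      rw [Real.norm_of_nonneg (M.pay_nonneg v j)]
      exact Finset.single_le_sum (fun i _ => M.pay_nonneg v i) (Finset.mem_univ j)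
  simp only [Fintype.card_fin] at ht
  calc (m / n : ℝ) * M.revenue (Measure.pi fun _ => μ)
      = (m / n : ℝ) * ∑ j, I j := by rw [revenue, integral_finsetSum _ fun j _ => hpay j]
    _ ≤ ∑ i, I (σ₀ (.inl i) + t) := ht
    _ = ∫ v, ∑ i, M.pay v ((σ₀.trans (Equiv.addRight t)) (.inl i)) ∂Measure.pi (fun _ => μ) :=
        (integral_finsetSum _ fun i _ => hpay _).symm
    _ ≤ M'.revenue (Measure.pi fun _ => μ) := hM'

theorem bddAbove_range_revenue_of_le (h : m ≤ n)
    (hB : BddAbove (Set.range fun M : Mechanism n => M.revenue (Measure.pi fun _ => μ))) :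
    BddAbove (Set.range fun M : Mechanism m => M.revenue (Measure.pi fun _ => μ)) := by
  obtain ⟨B, hB⟩ := hB
  refine ⟨B, Set.forall_mem_range.2 fun M => ?_⟩
  rw [← M.revenue_extend μ (finSumFinEquiv.trans (finCongr (Nat.add_sub_cancel' h)))]
  exact hB (Set.mem_range_self _)

end Mechanism

/-- Dropping `k` of `n` i.i.d. bidders loses at most a `k/n`
fraction of the optimal revenue: for any probability distribution `F` on `[0,∞)`
and `0 ≤ k < n`, `OPT(n - k bidders) ≥ (1 - k/n)·OPT(n bidders)`. -/
theorem optRevenue_subset_iid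
    (F : MeasureTheory.Measure ℝ) (hFprob : MeasureTheory.IsProbabilityMeasure F)
    (hFsupp : F (Set.Iio 0) = 0)
    (n k : ℕ) (hk : k < n) :
    (1 - (k : ℝ) / n) * optRevenue n (fun _ => F) ≤
      optRevenue (n - k) (fun _ => F) := by
  have : NeZero n := ⟨by omega⟩
  have hFnonneg : ∀ᵐ x ∂F, 0 ≤ x := by
    rw [ae_iff]
    simp only [not_le]
    exact hFsupp
  have hcoeff : 1 - (k : ℝ) / n = ((n - k : ℕ) : ℝ) / n := by
    have hn : (n : ℝ) ≠ 0 := NeZero.ne _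
    rw [Nat.cast_sub hk.le]
    field_simp
  simp only [Mechanism.optRevenue_eq_iSup_revenue, hcoeff]
  by_cases hB : BddAbove
      (Set.range fun M : Mechanism (n - k) => M.revenue (Measure.pi fun _ => F))
  · rw [Real.mul_iSup_of_nonneg (by positivity)]
    refine Real.iSup_le (fun M => ?_) (Real.iSup_nonneg fun M' => M'.revenue_nonneg _)
    obtain ⟨M', hM'⟩ := M.exists_mul_revenue_le_revenue F (Nat.sub_add_cancel hk.le) hFnonneg
    exact le_ciSup_of_le hB M' hM'
  · have hBn := mt (Mechanism.bddAbove_range_revenue_of_le F (Nat.sub_le n k)) hB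
    rw [Real.iSup_of_not_bddAbove hB, Real.iSup_of_not_bddAbove hBn, mul_zero]
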